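/- Let V be a finite type, let r be a strict linear order on V, and let E : V → V → Prop be a relation satisfying E u v → r u v. Let f : V → Bool be a labeling of the vertices, and let C be a finite set of binary strings such that for every c ∈ C there exists a list p : List V with List.Chain' E p and List.map f p = c. Then there exists a binary string s of length Fintype.card V that is a common supersequence of C, i.e., every c ∈ C satisfies List.Sublist c s. In particular, the length of a shortest common supersequence of C is at most the number of states of any acyclic vertex-labeled DAG that outputs every string of C along some directed path. (This is the correctness of the paper's reduction from shortest common supersequence to 0-minimal AMM-restricted schematic construction, one direction of the proof of its Theorem on AMM-restriction hardness for unbounded streaming codes.) -/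

import Mathlib

theorem List.IsChain.sublist_sort {V : Type*} [LinearOrder V] {p : List V}
    (hp : p.IsChain (· < ·)) {s : Finset V} (hps : ∀ x ∈ p, x ∈ s) :
    p.Sublist (s.sort (· ≤ ·)) := by
  have hlt : p.Pairwise (· < ·) := List.isChain_iff_pairwise.mp hp
  refine List.sublist_of_subperm_of_pairwise ?_ (hlt.imp le_of_lt) (s.pairwise_sort _)
  exact List.subperm_of_subset (hlt.imp ne_of_lt) fun x hx => by simpa using hps x hx

/-- Reduction correctness (Theorem: AMM-restriction hardness, one direction):
if every string of a finite corpus `C` is output along some directed path of an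
acyclic vertex-labeled DAG on vertex set `V`, then there is a common
supersequence of `C` of length `Fintype.card V`. -/
theorem dag_states_give_common_supersequence {V : Type*} [Fintype V] [LinearOrder V]
    (E : V → V → Prop) (hE : ∀ u v, E u v → u < v)
    (f : V → Bool) (C : Finset (List Bool))
    (hC : ∀ c ∈ C, ∃ p : List V, List.Chain' E p ∧ p.map f = c) :
    ∃ s : List Bool, s.length = Fintype.card V ∧ ∀ c ∈ C, c.Sublist s := by
  refine ⟨(Finset.univ.sort (· ≤ ·)).map f, by simp, fun c hc => ?_⟩
  obtain ⟨p, hp, rfl⟩ := hC c hc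
  exact ((hp.imp hE).sublist_sort fun x _ => Finset.mem_univ x).map f
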